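/- arXiv:2010.07452 — 2 statements merged into one kernel-verified Lean document; each statement's English description precedes it below -/
import Mathlib

section
/- Let X be a Borel subset of ℝ^m, Y a finite set, U a finite set, T a transition kernel from X×U to X and Q an observation kernel from X to Y, and let η be the associated belief transition kernel. Then, without any further assumptions, for every z, z' ∈ P(X), every u ∈ U, and every sequence (f_m)_{m≥1} of measurable functions f_m : X → ℝ with ‖f_m‖_∞ ≤ 1, one has ρ_BL^ρ(η(·|z,u), η(·|z',u)) ≤ 3 ‖z − z'‖_TV. -/
open MeasureTheory

noncomputable section

/-- `‖f‖_BL ≤ c` with respect to the distance-like function `d`: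
there are `a, b ≥ 0` with `a + b ≤ c` such that `f` is bounded by `a` and
`b`-Lipschitz with respect to `d`. -/
def blNormLE {S : Type*} (d : S → S → ℝ) (f : S → ℝ) (c : ℝ) : Prop :=
  ∃ a b : ℝ, 0 ≤ a ∧ 0 ≤ b ∧ a + b ≤ c ∧ (∀ x, |f x| ≤ a) ∧
    ∀ x y, |f x - f y| ≤ b * d x y

/-- Bounded-Lipschitz distance between two measures, induced by `d`. -/
def blDist {S : Type*} [MeasurableSpace S] (d : S → S → ℝ) (μ ν : Measure S) : ℝ :=
  sSup {r | ∃ f : S → ℝ, Measurable f ∧ blNormLE d f 1 ∧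
    r = |∫ x, f x ∂μ - ∫ x, f x ∂ν|}

/-- Total variation distance between two measures. -/
def tvDist {S : Type*} [MeasurableSpace S] (μ ν : Measure S) : ℝ :=
  sSup {r | ∃ f : S → ℝ, Measurable f ∧ (∀ x, |f x| ≤ 1) ∧
    r = |∫ x, f x ∂μ - ∫ x, f x ∂ν|}

variable {X Y U : Type*} [MeasurableSpace X] [Fintype Y]

/-- One-step push-forward `zT_u` of a belief `z` through the transition kernel `T`. -/
def beliefPush (T : X → U → Measure X) (z : Measure X) (u : U) : Measure X :=
  z.bind fun x => T x u

/-- Predictive probability `P(y|z,u) = ∫ Q(y|x₁) (zT_u)(dx₁)` of observing `y`. -/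
def obsProb (T : X → U → Measure X) (Q : X → Y → ℝ) (z : Measure X) (u : U) (y : Y) : ℝ :=
  ∫ x, Q x y ∂(beliefPush T z u)

/-- Bayes update `F(z,u,y)` of the belief `z` after applying `u` and observing `y`. -/
def bayes (T : X → U → Measure X) (Q : X → Y → ℝ) (z : Measure X) (u : U) (y : Y) :
    Measure X :=
  (ENNReal.ofReal (obsProb T Q z u y))⁻¹ •
    ((beliefPush T z u).withDensity fun x => ENNReal.ofReal (Q x y))

/-- Integral of a function `f` on beliefs against the belief transition kernel
`η(·|z,u) = Σ_{y : P(y|z,u) > 0} P(y|z,u) δ_{F(z,u,y)}`. -/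
def etaInt (T : X → U → Measure X) (Q : X → Y → ℝ) (f : Measure X → ℝ)
    (z : Measure X) (u : U) : ℝ :=
  ∑ y : Y, if 0 < obsProb T Q z u y then obsProb T Q z u y * f (bayes T Q z u y) else 0

/-- Bounded-Lipschitz distance (with respect to a pseudometric `ρ` on beliefs)
between `η(·|z,u)` and `η(·|z',u)`. -/
def etaBLDist (T : X → U → Measure X) (Q : X → Y → ℝ)
    (ρ : Measure X → Measure X → ℝ) (z z' : Measure X) (u : U) : ℝ :=
  sSup {r | ∃ f : Measure X → ℝ, blNormLE ρ f 1 ∧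
    r = |etaInt T Q f z u - etaInt T Q f z' u|}

/-- The pseudometric `ρ(μ,ν) = Σ_{m ≥ 1} 2^{-(m+1)} |∫ f_m dμ - ∫ f_m dν|` on beliefs
induced by the sequence of test functions `fs` (with `fs k` playing the role of `f_{k+1}`). -/
def rhoSeq (fs : ℕ → X → ℝ) (μ ν : Measure X) : ℝ :=
  ∑' k : ℕ, (2 : ℝ)⁻¹ ^ (k + 2) * |∫ x, fs k x ∂μ - ∫ x, fs k x ∂ν|

/-- Dobrushin coefficient of an observation channel `Q` into a finite set. -/
def dobrushinObs (Q : X → Y → ℝ) : ℝ :=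
  ⨅ p : X × X, ∑ y : Y, min (Q p.1 y) (Q p.2 y)

/-- Dobrushin coefficient of a Markov kernel `K`, via finite measurable partitions. -/
def dobrushinKernel (K : X → Measure X) : ℝ :=
  sInf {r | ∃ (x x' : X) (n : ℕ) (A : Fin n → Set X),
    (∀ i, MeasurableSet (A i)) ∧ Pairwise (Function.onFun Disjoint A) ∧
    (⋃ i, A i) = Set.univ ∧
    r = ∑ i, min ((K x (A i)).toReal) ((K x' (A i)).toReal)}

/-- `δ̃(T) = inf_u δ(T(·|·,u))`. -/
def dobrushinTrans (T : X → U → Measure X) : ℝ :=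
  ⨅ u : U, dobrushinKernel fun x => T x u

end

/-!
The bound even holds with constant `1`. Let `f` have `‖f‖_∞ ≤ a` and `ρ`-Lipschitz
constant `b`, `a + b ≤ 1`. Writing `p = P(y|z,u)`, `F = F(z,u,y)` and `p', F'` for `z'`,
the `y`-summands of `η` differ by at most `a |p - p'| + b p ρ(F, F')`. Since
`p ∫ f_k dF = ∫ Q(y|·) f_k d(zT_u)`, the quantity `p ρ(F, F')` is at most the `ρ`-distance
of the unnormalised updates `Q(y|·) zT_u`, `Q(y|·) z'T_u` plus `|p - p'| / 2`. Summed over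
`y`, both `∑_y |p - p'|` and `∑_y |∫ Q(y|·) f_k d(zT_u) - ∫ Q(y|·) f_k d(z'T_u)|` are
integrals of a single test function bounded by `1` (choose the signs) against
`zT_u - z'T_u`, hence against `z - z'`, so the total is at most `(a + b) ‖z - z'‖_TV`.
-/

open MeasureTheory ProbabilityTheory

section TotalVariation

variable {S : Type*} [MeasurableSpace S] {μ ν : Measure S}

lemma abs_integral_le_of_abs_le [IsProbabilityMeasure μ] {g : S → ℝ} {C : ℝ}
    (hg : ∀ x, |g x| ≤ C) : |∫ x, g x ∂μ| ≤ C := by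
  simpa using norm_integral_le_of_norm_le_const (μ := μ)
    (ae_of_all _ fun x => (Real.norm_eq_abs _).trans_le (hg x))

lemma integrable_of_abs_le [IsFiniteMeasure μ] {g : S → ℝ} (hg : Measurable g) {C : ℝ}
    (hgC : ∀ x, |g x| ≤ C) : Integrable g μ :=
  .of_bound hg.aestronglyMeasurable C (ae_of_all _ fun x => (Real.norm_eq_abs _).trans_le (hgC x))

variable [IsProbabilityMeasure μ] [IsProbabilityMeasure ν]

lemma abs_integral_sub_le_tvDist {g : S → ℝ} (hg : Measurable g) (hg1 : ∀ x, |g x| ≤ 1) :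
    |∫ x, g x ∂μ - ∫ x, g x ∂ν| ≤ tvDist μ ν := by
  refine le_csSup ⟨2, ?_⟩ ⟨g, hg, hg1, rfl⟩
  rintro r ⟨f, -, hf1, rfl⟩
  calc |∫ x, f x ∂μ - ∫ x, f x ∂ν| ≤ |∫ x, f x ∂μ| + |∫ x, f x ∂ν| := abs_sub _ _
    _ ≤ 1 + 1 := add_le_add (abs_integral_le_of_abs_le hf1) (abs_integral_le_of_abs_le hf1)
    _ = 2 := one_add_one_eq_two

lemma tvDist_nonneg : 0 ≤ tvDist μ ν := by
  simpa using abs_integral_sub_le_tvDist (μ := μ) (ν := ν) (g := fun _ => 0) measurable_const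
    (by simp)

end TotalVariation

/-- Testing against `∑ i, sign (∫ g i ∂μ - ∫ g i ∂ν) • g i` turns a bound on single test
functions into a bound on the whole family. -/
lemma sum_abs_integral_sub_le {S ι : Type*} [MeasurableSpace S] [Fintype ι]
    {μ ν : Measure S} [IsFiniteMeasure μ] [IsFiniteMeasure ν] {C : ℝ}
    (hC : ∀ G : S → ℝ, Measurable G → (∀ x, |G x| ≤ 1) → ∫ x, G x ∂μ - ∫ x, G x ∂ν ≤ C)
    {g : ι → S → ℝ} (hg : ∀ i, Measurable (g i)) (hg1 : ∀ x, ∑ i, |g i x| ≤ 1) :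
    ∑ i, |∫ x, g i x ∂μ - ∫ x, g i x ∂ν| ≤ C := by
  set ε : ι → ℝ := fun i => SignType.sign (∫ x, g i x ∂μ - ∫ x, g i x ∂ν)
  have hε : ∀ i, |ε i| ≤ 1 := fun i => by
    rcases SignType.trichotomy (SignType.sign (∫ x, g i x ∂μ - ∫ x, g i x ∂ν)) with h | h | h <;>
      simp [ε, h]
  have hgi : ∀ i x, |g i x| ≤ 1 := fun i x =>
    (Finset.single_le_sum (fun j _ => abs_nonneg (g j x)) (Finset.mem_univ i)).trans (hg1 x)
  have hint : ∀ (ρ : Measure S) [IsFiniteMeasure ρ] i, Integrable (fun x => ε i * g i x) ρ :=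
    fun ρ _ i => (integrable_of_abs_le (hg i) (hgi i)).const_mul _
  have hG : ∀ x, |∑ i, ε i * g i x| ≤ 1 := fun x =>
    calc |∑ i, ε i * g i x| ≤ ∑ i, |g i x| := by
          refine (Finset.abs_sum_le_sum_abs _ _).trans (Finset.sum_le_sum fun i _ => ?_)
          rw [abs_mul]
          exact mul_le_of_le_one_left (abs_nonneg _) (hε i)
      _ ≤ 1 := hg1 x
  calc ∑ i, |∫ x, g i x ∂μ - ∫ x, g i x ∂ν|
      = ∫ x, ∑ i, ε i * g i x ∂μ - ∫ x, ∑ i, ε i * g i x ∂ν := by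
        rw [integral_finsetSum _ fun i _ => hint μ i, integral_finsetSum _ fun i _ => hint ν i,
          ← Finset.sum_sub_distrib]
        refine Finset.sum_congr rfl fun i _ => ?_
        rw [integral_const_mul, integral_const_mul, ← mul_sub, mul_comm, self_mul_sign]
    _ ≤ C := hC _ (Finset.measurable_sum _ fun i _ => (hg i).const_mul _) hG

section BeliefPush

variable {X U : Type*} [MeasurableSpace X] {T : X → U → Measure X} {u : U}
  [hT_prob : ∀ x, IsProbabilityMeasure (T x u)] {z z' : Measure X}
  [IsProbabilityMeasure z] [IsProbabilityMeasure z']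

/-- `T(·|·,u)` as a Markov kernel, so that `beliefPush T z u = transitionKernel hT ∘ₘ z`. -/
def transitionKernel (hT : Measurable fun x => T x u) : Kernel X X := ⟨fun x => T x u, hT⟩

instance (hT : Measurable fun x => T x u) : IsMarkovKernel (transitionKernel hT) :=
  ⟨hT_prob⟩

lemma isProbabilityMeasure_beliefPush (hT : Measurable fun x => T x u) :
    IsProbabilityMeasure (beliefPush T z u) :=
  inferInstanceAs (IsProbabilityMeasure (transitionKernel hT ∘ₘ z))

lemma integral_beliefPush (hT : Measurable fun x => T x u) {G : X → ℝ} (hG : Measurable G)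
    {C : ℝ} (hGC : ∀ x, |G x| ≤ C) :
    ∫ x, G x ∂(beliefPush T z u) = ∫ x, ∫ t, G t ∂(T x u) ∂z := by
  change ∫ x, G x ∂(transitionKernel hT ∘ₘ z) = _
  rw [Measure.comp_eq_comp_const_apply]
  exact Kernel.integral_comp (integrable_of_abs_le hG hGC)

lemma abs_integral_beliefPush_sub_le_tvDist (hT : Measurable fun x => T x u) {G : X → ℝ}
    (hG : Measurable G) (hG1 : ∀ x, |G x| ≤ 1) :
    |∫ x, G x ∂(beliefPush T z u) - ∫ x, G x ∂(beliefPush T z' u)| ≤ tvDist z z' := by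
  rw [integral_beliefPush hT hG hG1, integral_beliefPush hT hG hG1]
  exact abs_integral_sub_le_tvDist
    (hG.stronglyMeasurable.integral_kernel (κ := transitionKernel hT)).measurable
    fun x => abs_integral_le_of_abs_le hG1

lemma sum_abs_integral_beliefPush_sub_le_tvDist {ι : Type*} [Fintype ι]
    (hT : Measurable fun x => T x u) {g : ι → X → ℝ} (hg : ∀ i, Measurable (g i))
    (hg1 : ∀ x, ∑ i, |g i x| ≤ 1) :
    ∑ i, |∫ x, g i x ∂(beliefPush T z u) - ∫ x, g i x ∂(beliefPush T z' u)| ≤ tvDist z z' :=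
  have := isProbabilityMeasure_beliefPush (z := z) hT
  have := isProbabilityMeasure_beliefPush (z := z') hT
  sum_abs_integral_sub_le
    (fun _ hG hG1 => (le_abs_self _).trans (abs_integral_beliefPush_sub_le_tvDist hT hG hG1))
    hg hg1

end BeliefPush

lemma hasSum_inv_two_pow_add_two : HasSum (fun k : ℕ => (2 : ℝ)⁻¹ ^ (k + 2)) 2⁻¹ := by
  have h := (hasSum_geometric_of_lt_one (r := (2 : ℝ)⁻¹) (by norm_num) (by norm_num)).mul_right
    ((2 : ℝ)⁻¹ ^ 2)
  rw [show (1 - (2 : ℝ)⁻¹)⁻¹ * 2⁻¹ ^ 2 = 2⁻¹ by norm_num] at h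
  simpa only [← pow_add] using h

lemma summable_inv_two_pow_add_two_mul {x : ℕ → ℝ} {B : ℝ} (h0 : ∀ k, 0 ≤ x k) (hB : ∀ k, x k ≤ B) :
    Summable fun k => (2 : ℝ)⁻¹ ^ (k + 2) * x k :=
  .of_nonneg_of_le (fun k => mul_nonneg (by positivity) (h0 k))
    (fun k => mul_le_mul_of_nonneg_left (hB k) (by positivity)) (hasSum_inv_two_pow_add_two.summable.mul_right B)

lemma tsum_inv_two_pow_add_two_mul_le_add {x y : ℕ → ℝ} {d B : ℝ} (hx : ∀ k, 0 ≤ x k)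
    (hxy : ∀ k, x k ≤ y k + d) (hy : ∀ k, 0 ≤ y k) (hyB : ∀ k, y k ≤ B) :
    ∑' k, (2 : ℝ)⁻¹ ^ (k + 2) * x k ≤ ∑' k, (2 : ℝ)⁻¹ ^ (k + 2) * y k + 2⁻¹ * d := by
  have hsy := summable_inv_two_pow_add_two_mul hy hyB
  have hsd := hasSum_inv_two_pow_add_two.mul_right d
  calc ∑' k, (2 : ℝ)⁻¹ ^ (k + 2) * x k
      ≤ ∑' k, ((2 : ℝ)⁻¹ ^ (k + 2) * y k + (2 : ℝ)⁻¹ ^ (k + 2) * d) :=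
        (summable_inv_two_pow_add_two_mul hx fun k => (hxy k).trans (add_le_add_left (hyB k) d)).tsum_le_tsum
          (fun k => by rw [← mul_add]; exact mul_le_mul_of_nonneg_left (hxy k) (by positivity))
          (hsy.add hsd.summable)
    _ = ∑' k, (2 : ℝ)⁻¹ ^ (k + 2) * y k + 2⁻¹ * d := by
        rw [hsy.tsum_add hsd.summable, hsd.tsum_eq]

lemma sum_tsum_inv_two_pow_add_two_mul_le {ι : Type*} [Fintype ι] {x : ι → ℕ → ℝ} {C : ℝ}
    (h0 : ∀ i k, 0 ≤ x i k) (hC : ∀ k, ∑ i, x i k ≤ C) :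
    ∑ i, ∑' k, (2 : ℝ)⁻¹ ^ (k + 2) * x i k ≤ 2⁻¹ * C := by
  have hle : ∀ i k, x i k ≤ C := fun i k =>
    (Finset.single_le_sum (fun j _ => h0 j k) (Finset.mem_univ i)).trans (hC k)
  have hsum := fun i => summable_inv_two_pow_add_two_mul (h0 i) (hle i)
  rw [← Summable.tsum_finsetSum fun i _ => hsum i, ← (hasSum_inv_two_pow_add_two.mul_right C).tsum_eq]
  refine (summable_sum fun i _ => hsum i).tsum_le_tsum (fun k => ?_)
    (hasSum_inv_two_pow_add_two.mul_right C).summable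
  rw [← Finset.mul_sum]
  exact mul_le_mul_of_nonneg_left (hC k) (by positivity)

lemma rhoSeq_nonneg {X : Type*} [MeasurableSpace X] (fs : ℕ → X → ℝ) (μ ν : Measure X) :
    0 ≤ rhoSeq fs μ ν :=
  tsum_nonneg fun _ => mul_nonneg (by positivity) (abs_nonneg _)

lemma mul_abs_sub_le_of_mul_eq {p p' I I' J J' : ℝ} (hp : 0 ≤ p) (hJ : p * I = J)
    (hJ' : p' * I' = J') (hI' : |I'| ≤ 1) : p * |I - I'| ≤ |J - J'| + |p - p'| :=
  calc p * |I - I'| = |p * (I - I')| := by rw [abs_mul, abs_of_nonneg hp]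
    _ = |(J - J') - (p - p') * I'| := by rw [← hJ, ← hJ']; ring_nf
    _ ≤ |J - J'| + |p - p'| * |I'| := (abs_sub _ _).trans_eq (by rw [abs_mul])
    _ ≤ |J - J'| + |p - p'| := by gcongr; exact mul_le_of_le_one_right (abs_nonneg _) hI'

/-- `r` stands for `ρ` between two Bayes updates, which is only meaningful when both
normalising constants `p, p'` are positive; otherwise `|v|, |v'| ≤ a` suffices. -/
lemma abs_mul_sub_mul_le {p p' v v' a b r s : ℝ} (hp : 0 ≤ p) (hp' : 0 ≤ p') (hv : |v| ≤ a)
    (hv' : |v'| ≤ a) (hb : 0 ≤ b) (hs : 0 ≤ s) (hvv' : |v - v'| ≤ b * r)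
    (hr : 0 < p → 0 < p' → p * r ≤ s) : |p * v - p' * v'| ≤ a * |p - p'| + b * s := by
  have hbs : 0 ≤ b * s := mul_nonneg hb hs
  rcases hp.eq_or_lt with rfl | hp
  · rw [zero_mul, zero_sub, abs_neg, abs_mul, zero_sub, abs_neg, abs_of_nonneg hp']
    nlinarith
  rcases hp'.eq_or_lt with rfl | hp'
  · rw [zero_mul, sub_zero, abs_mul, sub_zero, abs_of_nonneg hp.le]
    nlinarith
  calc |p * v - p' * v'| = |p * (v - v') + (p - p') * v'| := by ring_nf
    _ ≤ p * (b * r) + |p - p'| * a := by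
        refine (abs_add_le _ _).trans ?_
        rw [abs_mul, abs_mul, abs_of_nonneg hp.le]
        gcongr
    _ ≤ a * |p - p'| + b * s := by nlinarith [hr hp hp']

lemma abs_integral_mul_le_integral {S : Type*} [MeasurableSpace S] {μ : Measure S}
    {w f : S → ℝ} (hw : Integrable w μ) (hw0 : ∀ x, 0 ≤ w x) (hf : ∀ x, |f x| ≤ 1) :
    |∫ x, w x * f x ∂μ| ≤ ∫ x, w x ∂μ :=
  norm_integral_le_of_norm_le (f := fun x => w x * f x) hw <| ae_of_all _ fun x => by
    rw [Real.norm_eq_abs, abs_mul, abs_of_nonneg (hw0 x)]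
    exact mul_le_of_le_one_right (hw0 x) (hf x)

section Bayes

variable {X Y U : Type*} [MeasurableSpace X] {T : X → U → Measure X}
  {Q : X → Y → ℝ} {u : U} {z z' : Measure X} {y : Y}

lemma obsProb_mul_integral_bayes (hQm : Measurable fun x => Q x y) (hQ0 : ∀ x, 0 ≤ Q x y)
    (hp : 0 < obsProb T Q z u y) (f : X → ℝ) :
    obsProb T Q z u y * ∫ t, f t ∂(bayes T Q z u y) = ∫ x, Q x y * f x ∂(beliefPush T z u) := by
  rw [bayes, integral_smul_measure, ENNReal.toReal_inv, ENNReal.toReal_ofReal hp.le,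
    smul_eq_mul, ← mul_assoc, mul_inv_cancel₀ hp.ne', one_mul]
  change ∫ t, f t ∂(beliefPush T z u).withDensity (fun x => (Real.toNNReal (Q x y) : ENNReal)) = _
  rw [integral_withDensity_eq_integral_smul hQm.real_toNNReal]
  simp only [NNReal.smul_def, Real.coe_toNNReal _ (hQ0 _), smul_eq_mul]

lemma abs_integral_bayes_le_one (hQm : Measurable fun x => Q x y) (hQ0 : ∀ x, 0 ≤ Q x y)
    (hp : 0 < obsProb T Q z u y) {f : X → ℝ} (hf : ∀ x, |f x| ≤ 1) :
    |∫ t, f t ∂(bayes T Q z u y)| ≤ 1 := by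
  refine le_of_mul_le_mul_left ?_ hp
  calc obsProb T Q z u y * |∫ t, f t ∂(bayes T Q z u y)|
      = |∫ x, Q x y * f x ∂(beliefPush T z u)| := by
        rw [← obsProb_mul_integral_bayes hQm hQ0 hp, abs_mul, abs_of_pos hp]
    _ ≤ obsProb T Q z u y * 1 := by
        rw [mul_one]
        exact abs_integral_mul_le_integral (.of_integral_ne_zero hp.ne') hQ0 hf

lemma obsProb_mul_rhoSeq_bayes_le {fs : ℕ → X → ℝ} (hQm : Measurable fun x => Q x y)
    (hQ0 : ∀ x, 0 ≤ Q x y) (hfs : ∀ k x, |fs k x| ≤ 1)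
    (hp : 0 < obsProb T Q z u y) (hp' : 0 < obsProb T Q z' u y) :
    obsProb T Q z u y * rhoSeq fs (bayes T Q z u y) (bayes T Q z' u y) ≤
      rhoSeq (fun k x => Q x y * fs k x) (beliefPush T z u) (beliefPush T z' u) +
        2⁻¹ * |obsProb T Q z u y - obsProb T Q z' u y| := by
  set p := obsProb T Q z u y
  set p' := obsProb T Q z' u y
  have hJ := fun k => obsProb_mul_integral_bayes hQm hQ0 hp (fs k)
  have hJ' := fun k => obsProb_mul_integral_bayes hQm hQ0 hp' (fs k)
  have hI := fun k => abs_integral_bayes_le_one hQm hQ0 hp (hfs k)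
  have hI' := fun k => abs_integral_bayes_le_one hQm hQ0 hp' (hfs k)
  rw [rhoSeq, ← tsum_mul_left]
  simp_rw [← mul_assoc, mul_comm p, mul_assoc]
  refine tsum_inv_two_pow_add_two_mul_le_add (B := p + p') (fun k => mul_nonneg hp.le (abs_nonneg _))
    (fun k => mul_abs_sub_le_of_mul_eq hp.le (hJ k) (hJ' k) (hI' k)) (fun k => abs_nonneg _)
    (fun k => ?_)
  rw [← hJ k, ← hJ' k]
  refine (abs_sub _ _).trans ?_
  rw [abs_mul, abs_mul, abs_of_pos hp, abs_of_pos hp']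
  gcongr
  · exact mul_le_of_le_one_right hp.le (hI k)
  · exact mul_le_of_le_one_right hp'.le (hI' k)

end Bayes

section BeliefTransition

variable {X Y U : Type*} [MeasurableSpace X] [Fintype Y] {T : X → U → Measure X}
  {Q : X → Y → ℝ} {u : U} {z z' : Measure X} {fs : ℕ → X → ℝ}

lemma etaInt_eq_sum (hQ0 : ∀ x y, 0 ≤ Q x y) (f : Measure X → ℝ) :
    etaInt T Q f z u = ∑ y, obsProb T Q z u y * f (bayes T Q z u y) :=
  Finset.sum_congr rfl fun y _ => by
    have hp : 0 ≤ obsProb T Q z u y := integral_nonneg (hQ0 · y)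
    split_ifs with h
    · rfl
    · rw [le_antisymm (not_lt.mp h) hp, zero_mul]

lemma abs_etaInt_sub_le_tvDist (hT : Measurable fun x => T x u)
    [∀ x, IsProbabilityMeasure (T x u)] [IsProbabilityMeasure z] [IsProbabilityMeasure z']
    (hQm : ∀ y, Measurable fun x => Q x y) (hQ0 : ∀ x y, 0 ≤ Q x y)
    (hQ1 : ∀ x, ∑ y, Q x y = 1) (hfsm : ∀ k, Measurable (fs k)) (hfs : ∀ k x, |fs k x| ≤ 1)
    {f : Measure X → ℝ} (hf : blNormLE (rhoSeq fs) f 1) :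
    |etaInt T Q f z u - etaInt T Q f z' u| ≤ tvDist z z' := by
  obtain ⟨a, b, ha, hb, hab, hfa, hfb⟩ := hf
  set Δ : Y → ℝ := fun y => |obsProb T Q z u y - obsProb T Q z' u y|
  set S : Y → ℝ := fun y =>
    rhoSeq (fun k x => Q x y * fs k x) (beliefPush T z u) (beliefPush T z' u)
  have hQfs : ∀ k x, ∑ y, |Q x y * fs k x| ≤ 1 := fun k x => by
    simp_rw [abs_mul, abs_of_nonneg (hQ0 x _), ← Finset.sum_mul, hQ1 x, one_mul]
    exact hfs k x
  have hΔ : ∑ y, Δ y ≤ tvDist z z' :=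
    sum_abs_integral_beliefPush_sub_le_tvDist hT hQm fun x => by
      simp_rw [abs_of_nonneg (hQ0 x _), hQ1 x, le_refl]
  have hS : ∑ y, S y ≤ 2⁻¹ * tvDist z z' :=
    sum_tsum_inv_two_pow_add_two_mul_le (fun _ _ => abs_nonneg _) fun k =>
      sum_abs_integral_beliefPush_sub_le_tvDist hT (fun y => (hQm y).mul (hfsm k)) (hQfs k)
  have hy : ∀ y, |obsProb T Q z u y * f (bayes T Q z u y) -
      obsProb T Q z' u y * f (bayes T Q z' u y)| ≤ a * Δ y + b * (S y + 2⁻¹ * Δ y) := fun y =>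
    abs_mul_sub_mul_le (integral_nonneg (hQ0 · y)) (integral_nonneg (hQ0 · y)) (hfa _) (hfa _)
      hb (add_nonneg (rhoSeq_nonneg _ _ _) (by positivity)) (hfb _ _)
      (obsProb_mul_rhoSeq_bayes_le (hQm y) (hQ0 · y) hfs)
  calc |etaInt T Q f z u - etaInt T Q f z' u|
      ≤ ∑ y, (a * Δ y + b * (S y + 2⁻¹ * Δ y)) := by
        rw [etaInt_eq_sum hQ0, etaInt_eq_sum hQ0, ← Finset.sum_sub_distrib]
        exact (Finset.abs_sum_le_sum_abs _ _).trans (Finset.sum_le_sum fun y _ => hy y)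
    _ = (a + b / 2) * ∑ y, Δ y + b * ∑ y, S y := by
        simp only [mul_add, Finset.sum_add_distrib, ← Finset.mul_sum]
        ring
    _ ≤ (a + b / 2) * tvDist z z' + b * (2⁻¹ * tvDist z z') := by gcongr
    _ ≤ tvDist z z' := by nlinarith [tvDist_nonneg (μ := z) (ν := z')]

lemma etaBLDist_le_tvDist (hT : Measurable fun x => T x u)
    [∀ x, IsProbabilityMeasure (T x u)] [IsProbabilityMeasure z] [IsProbabilityMeasure z']
    (hQm : ∀ y, Measurable fun x => Q x y) (hQ0 : ∀ x y, 0 ≤ Q x y)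
    (hQ1 : ∀ x, ∑ y, Q x y = 1) (hfsm : ∀ k, Measurable (fs k)) (hfs : ∀ k x, |fs k x| ≤ 1) :
    etaBLDist T Q (rhoSeq fs) z z' u ≤ tvDist z z' :=
  Real.sSup_le (fun _ ⟨_, hf, hr⟩ =>
    hr ▸ abs_etaInt_sub_le_tvDist hT hQm hQ0 hQ1 hfsm hfs hf) tvDist_nonneg

end BeliefTransition

theorem statement2_general {m : ℕ} (Xs : Set (EuclideanSpace ℝ (Fin m)))
    {Y U : Type*} [Fintype Y]
    (T : Xs → U → MeasureTheory.Measure Xs)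
    (hT_meas : ∀ u : U, Measurable fun x : Xs => T x u)
    (hT_prob : ∀ (x : Xs) (u : U), MeasureTheory.IsProbabilityMeasure (T x u))
    (Q : Xs → Y → ℝ)
    (hQ_meas : ∀ y : Y, Measurable fun x : Xs => Q x y)
    (hQ_nonneg : ∀ (x : Xs) (y : Y), 0 ≤ Q x y)
    (hQ_sum : ∀ x : Xs, ∑ y : Y, Q x y = 1)
    (fs : ℕ → Xs → ℝ)
    (hfs_meas : ∀ k, Measurable (fs k))
    (hfs_bdd : ∀ (k : ℕ) (x : Xs), |fs k x| ≤ 1)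
    (z z' : MeasureTheory.Measure Xs)
    (hz : MeasureTheory.IsProbabilityMeasure z)
    (hz' : MeasureTheory.IsProbabilityMeasure z')
    (u : U) :
    etaBLDist T Q (rhoSeq fs) z z' u ≤ 3 * tvDist z z' := by
  have := fun x => hT_prob x u
  calc etaBLDist T Q (rhoSeq fs) z z' u ≤ tvDist z z' :=
        etaBLDist_le_tvDist (hT_meas u) hQ_meas hQ_nonneg hQ_sum hfs_meas hfs_bdd
    _ ≤ 3 * tvDist z z' := le_mul_of_one_le_left tvDist_nonneg (by norm_num)

theorem statement2 {m : ℕ} (Xs : Set (EuclideanSpace ℝ (Fin m))) (hXs : MeasurableSet Xs)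
    {Y U : Type*} [Fintype Y] [Fintype U]
    (T : Xs → U → MeasureTheory.Measure Xs)
    (hT_meas : ∀ u : U, Measurable fun x : Xs => T x u)
    (hT_prob : ∀ (x : Xs) (u : U), MeasureTheory.IsProbabilityMeasure (T x u))
    (Q : Xs → Y → ℝ)
    (hQ_meas : ∀ y : Y, Measurable fun x : Xs => Q x y)
    (hQ_nonneg : ∀ (x : Xs) (y : Y), 0 ≤ Q x y)
    (hQ_sum : ∀ x : Xs, ∑ y : Y, Q x y = 1)
    (fs : ℕ → Xs → ℝ)
    (hfs_meas : ∀ k, Measurable (fs k))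
    (hfs_bdd : ∀ (k : ℕ) (x : Xs), |fs k x| ≤ 1)
    (z z' : MeasureTheory.Measure Xs)
    (hz : MeasureTheory.IsProbabilityMeasure z)
    (hz' : MeasureTheory.IsProbabilityMeasure z')
    (u : U) :
    etaBLDist T Q (rhoSeq fs) z z' u ≤ 3 * tvDist z z' :=
  statement2_general Xs T hT_meas hT_prob Q hQ_meas hQ_nonneg hQ_sum fs hfs_meas hfs_bdd z z' hz hz'
    u
end

section
/- Let (Z,d) be a metric space, U a finite nonempty set, β ∈ (0,1) with βα_Z < 1, c : Z×U → ℝ bounded measurable with |c(z,u) − c(z',u)| ≤ ‖c‖_∞ d(z,z') for all z, z' ∈ Z and u ∈ U, and let η be a Markov kernel from Z×U to Z satisfying the bounded-Lipschitz contraction condition with constant α_Z. If J : Z → ℝ is a bounded Lipschitz function satisfying the fixed-point equation J(z) = min_{u∈U} ( c(z,u) + β ∫ J(z₁) η(dz₁|z,u) ) for all z ∈ Z, then ‖J‖_BL ≤ ((2 − β)/((1 − β)(1 − βα_Z))) ‖c‖_∞. (This applies in particular when Z is the set of probability measures on a Borel space X metrized by total variation and c(z,u) = ∫ c₀(x,u)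 z(dx) for a bounded measurable stage cost c₀.) -/
open MeasureTheory

noncomputable section

/-- Sup norm `‖c‖_∞` of a two-variable (stage cost) function. -/
def supNorm {Z U : Type*} (c : Z → U → ℝ) : ℝ :=
  ⨆ p : Z × U, |c p.1 p.2|

/-- The bounded-Lipschitz contraction condition for the kernel `η` with constant `αZ`:
`|∫ f dη(·|z,u) − ∫ f dη(·|z',u)| ≤ αZ ‖f‖_BL d(z,z')` for every bounded Lipschitz `f`. -/
def blContract {Z U : Type*} [MeasurableSpace Z] [MetricSpace Z]
    (η : Z → U → Measure Z) (αZ : ℝ) : Prop :=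
  ∀ (f : Z → ℝ) (C : ℝ), blNormLE dist f C → ∀ (u : U) (z z' : Z),
    |∫ x, f x ∂(η z u) - ∫ x, f x ∂(η z' u)| ≤ αZ * C * dist z z'

end

open MeasureTheory Set Filter Topology

/-!
The fixed point `J` of the Bellman operator `T` inherits the bounds that `T` propagates: if
`|J| ≤ a` then `|T J| ≤ ‖c‖_∞ + β a`, and if moreover `J` is `b`-Lipschitz then `T J` is
`(‖c‖_∞ + β α_Z (a + b))`-Lipschitz, because a minimum over finitely many actions is
1-Lipschitz in the sup norm. Since `J = T J`, the closed set of admissible sup bounds is invariant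
under the contraction `a ↦ ‖c‖_∞ + β a`, so it contains the fixed point `‖c‖_∞ / (1 - β)`;
likewise the Lipschitz constant is at most `(‖c‖_∞ + β α_Z A) / (1 - β α_Z)` with
`A = ‖c‖_∞ / (1 - β)`, and the two add up to the claimed bound.
-/

lemma abs_ciInf_sub_ciInf_le {ι : Type*} [Finite ι] [Nonempty ι] {f g : ι → ℝ} {M : ℝ}
    (h : ∀ i, |f i - g i| ≤ M) : |(⨅ i, f i) - ⨅ i, g i| ≤ M := by
  obtain ⟨i, hi⟩ := exists_eq_ciInf_of_finite (f := g)
  obtain ⟨j, hj⟩ := exists_eq_ciInf_of_finite (f := f)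
  have hfi := ciInf_le (Finite.bddBelow_range f) i
  have hgj := ciInf_le (Finite.bddBelow_range g) j
  rw [abs_sub_le_iff]
  constructor <;> linarith [(abs_sub_le_iff.mp (h i)).1, (abs_sub_le_iff.mp (h j)).2]

/-- The iterates of `x ↦ K + q x` starting at `b` converge to its fixed point `K / (1 - q)`. -/
lemma IsClosed.div_one_sub_mem_of_mapsTo {S : Set ℝ} (hS : IsClosed S) {K q b : ℝ}
    (hq0 : 0 ≤ q) (hq1 : q < 1) (hb : b ∈ S) (hmaps : MapsTo (fun x => K + q * x) S S) :
    K / (1 - q) ∈ S := by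
  set x₀ := K / (1 - q)
  have hfix : K + q * x₀ = x₀ := by
    simp only [x₀]; field_simp [(sub_pos.2 hq1).ne']; ring
  have hiter : ∀ n : ℕ, x₀ + q ^ n * (b - x₀) ∈ S := by
    intro n
    induction n with
    | zero => simpa using hb
    | succ n ih => convert hmaps ih using 1; rw [pow_succ]; linear_combination -hfix
  have hlim : Tendsto (fun n : ℕ => x₀ + q ^ n * (b - x₀)) atTop (𝓝 x₀) := by
    simpa using ((tendsto_pow_atTop_nhds_zero_of_lt_one hq0 hq1).mul_const (b - x₀)).const_add x₀
  exact hS.mem_of_tendsto hlim (Eventually.of_forall hiter)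

lemma isClosed_setOf_forall_abs_le {Z : Type*} (J : Z → ℝ) :
    IsClosed {a : ℝ | ∀ z, |J z| ≤ a} := by
  simp only [ofPred_forall]
  exact isClosed_iInter fun z => isClosed_le continuous_const continuous_id

lemma isClosed_setOf_lipschitz_const {Z : Type*} [PseudoMetricSpace Z] (J : Z → ℝ) :
    IsClosed {b : ℝ | 0 ≤ b ∧ ∀ z z', |J z - J z'| ≤ b * dist z z'} := by
  simp only [ofPred_and, ofPred_forall]
  exact (isClosed_le continuous_const continuous_id).inter <| isClosed_iInter fun z =>
    isClosed_iInter fun z' => isClosed_le continuous_const (continuous_id.mul continuous_const)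

lemma supNorm_nonneg {Z U : Type*} (c : Z → U → ℝ) : 0 ≤ supNorm c :=
  Real.iSup_nonneg fun _ => abs_nonneg _

lemma abs_le_supNorm {Z U : Type*} {c : Z → U → ℝ} (hc : ∃ M, ∀ z u, |c z u| ≤ M) (z : Z)
    (u : U) : |c z u| ≤ supNorm c := by
  obtain ⟨M, hM⟩ := hc
  exact le_ciSup (f := fun p : Z × U => |c p.1 p.2|) ⟨M, by rintro _ ⟨p, rfl⟩; exact hM p.1 p.2⟩
    (z, u)

section Bellman

variable {Z U : Type*} [MeasurableSpace Z] [Finite U] [Nonempty U]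

noncomputable def bellmanOp (c : Z → U → ℝ) (β : ℝ) (η : Z → U → Measure Z) (J : Z → ℝ) (z : Z) :
    ℝ :=
  ⨅ u, (c z u + β * ∫ x, J x ∂(η z u))

lemma abs_integral_le_of_forall_abs_le {μ : Measure Z} [IsProbabilityMeasure μ] {f : Z → ℝ}
    {a : ℝ} (h : ∀ z, |f z| ≤ a) : |∫ z, f z ∂μ| ≤ a := by
  simpa using norm_integral_le_of_norm_le_const (μ := μ)
    (Eventually.of_forall h : ∀ᵐ z ∂μ, ‖f z‖ ≤ a)

lemma abs_bellmanOp_le {c : Z → U → ℝ} {β K a : ℝ} {η : Z → U → Measure Z} {J : Z → ℝ}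
    (hβ : 0 ≤ β) (hc : ∀ z u, |c z u| ≤ K) (hη : ∀ z u, IsProbabilityMeasure (η z u))
    (hJ : ∀ z, |J z| ≤ a) (z : Z) :
    |bellmanOp c β η J z| ≤ K + β * a := by
  have hterm : ∀ u, |c z u + β * ∫ x, J x ∂(η z u) - 0| ≤ K + β * a := fun u => by
    have := hη z u
    calc |c z u + β * ∫ x, J x ∂(η z u) - 0|
        ≤ |c z u| + |β * ∫ x, J x ∂(η z u)| := by rw [sub_zero]; exact abs_add_le _ _
      _ = |c z u| + β * |∫ x, J x ∂(η z u)| := by rw [abs_mul, abs_of_nonneg hβ]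
      _ ≤ K + β * a := by gcongr; exacts [hc z u, abs_integral_le_of_forall_abs_le hJ]
  have h := abs_ciInf_sub_ciInf_le hterm
  rwa [ciInf_const, sub_zero] at h

lemma abs_bellmanOp_sub_le [MetricSpace Z] {c : Z → U → ℝ} {β K α a b : ℝ}
    {η : Z → U → Measure Z} {J : Z → ℝ} (hβ : 0 ≤ β)
    (hc : ∀ z z' u, |c z u - c z' u| ≤ K * dist z z') (hη : blContract η α)
    (ha : 0 ≤ a) (hb : 0 ≤ b) (hJa : ∀ z, |J z| ≤ a)
    (hJb : ∀ z z', |J z - J z'| ≤ b * dist z z') (z z' : Z) :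
    |bellmanOp c β η J z - bellmanOp c β η J z'| ≤ (K + β * α * (a + b)) * dist z z' := by
  refine abs_ciInf_sub_ciInf_le fun u => ?_
  have hint := hη J (a + b) ⟨a, b, ha, hb, le_rfl, hJa, hJb⟩ u z z'
  calc |c z u + β * ∫ x, J x ∂(η z u) - (c z' u + β * ∫ x, J x ∂(η z' u))|
      = |(c z u - c z' u) + β * (∫ x, J x ∂(η z u) - ∫ x, J x ∂(η z' u))| := by
        congr 1; ring
    _ ≤ |c z u - c z' u| + |β * (∫ x, J x ∂(η z u) - ∫ x, J x ∂(η z' u))| := abs_add_le _ _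
    _ = |c z u - c z' u| + β * |∫ x, J x ∂(η z u) - ∫ x, J x ∂(η z' u)| := by
        rw [abs_mul, abs_of_nonneg hβ]
    _ ≤ K * dist z z' + β * (α * (a + b) * dist z z') := by gcongr; exact hc z z' u
    _ = (K + β * α * (a + b)) * dist z z' := by ring

end Bellman

theorem statement9_general {Z U : Type*} [MetricSpace Z] [MeasurableSpace Z]
    [Fintype U] [Nonempty U]
    (β : ℝ) (hβ0 : 0 < β) (hβ1 : β < 1)
    (c : Z → U → ℝ)
    (hc_bdd : ∃ M : ℝ, ∀ (z : Z) (u : U), |c z u| ≤ M)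
    (hc_lip : ∀ (z z' : Z) (u : U), |c z u - c z' u| ≤ supNorm c * dist z z')
    (η : Z → U → MeasureTheory.Measure Z)
    (hη_prob : ∀ (z : Z) (u : U), MeasureTheory.IsProbabilityMeasure (η z u))
    (αZ : ℝ) (hαZ : 0 ≤ αZ)
    (hη_contract : blContract η αZ)
    (hβαZ : β * αZ < 1)
    (J : Z → ℝ)
    (hJ_bl : ∃ C : ℝ, blNormLE dist J C)
    (hJ_fix : ∀ z : Z, J z = ⨅ u : U, (c z u + β * ∫ z₁, J z₁ ∂(η z u))) :
    blNormLE dist J ((2 - β) / ((1 - β) * (1 - β * αZ)) * supNorm c) := by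
  obtain ⟨-, a₀, b₀, -, hb₀, -, hJa₀, hJb₀⟩ := hJ_bl
  have hJ : bellmanOp c β η J = J := (funext hJ_fix).symm
  set K := supNorm c
  have hK : 0 ≤ K := supNorm_nonneg c
  have hA : ∀ z, |J z| ≤ K / (1 - β) :=
    (isClosed_setOf_forall_abs_le J).div_one_sub_mem_of_mapsTo hβ0.le hβ1 hJa₀ fun a ha z => by
      rw [← hJ]; exact abs_bellmanOp_le hβ0.le (abs_le_supNorm hc_bdd) hη_prob ha z
  have hA0 : 0 ≤ K / (1 - β) := div_nonneg hK (sub_pos.2 hβ1).le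
  have hB := (isClosed_setOf_lipschitz_const J).div_one_sub_mem_of_mapsTo
    (K := K + β * αZ * (K / (1 - β))) (mul_nonneg hβ0.le hαZ) hβαZ ⟨hb₀, hJb₀⟩
    fun b ⟨hb, hJb⟩ => ⟨by positivity, fun z z' => by
      rw [← hJ]
      exact (abs_bellmanOp_sub_le hβ0.le hc_lip hη_contract hA0 hb hA hJb z z').trans_eq
        (by ring)⟩
  refine ⟨_, _, hA0, hB.1, le_of_eq ?_, hA, hB.2⟩
  field_simp [(sub_pos.2 hβ1).ne', (sub_pos.2 hβαZ).ne']
  ring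

theorem statement9 {Z U : Type*} [MetricSpace Z] [MeasurableSpace Z] [BorelSpace Z]
    [Fintype U] [Nonempty U]
    (β : ℝ) (hβ0 : 0 < β) (hβ1 : β < 1)
    (c : Z → U → ℝ)
    (hc_meas : ∀ u : U, Measurable fun z : Z => c z u)
    (hc_bdd : ∃ M : ℝ, ∀ (z : Z) (u : U), |c z u| ≤ M)
    (hc_lip : ∀ (z z' : Z) (u : U), |c z u - c z' u| ≤ supNorm c * dist z z')
    (η : Z → U → MeasureTheory.Measure Z)
    (hη_meas : ∀ u : U, Measurable fun z : Z => η z u)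
    (hη_prob : ∀ (z : Z) (u : U), MeasureTheory.IsProbabilityMeasure (η z u))
    (αZ : ℝ) (hαZ : 0 ≤ αZ)
    (hη_contract : blContract η αZ)
    (hβαZ : β * αZ < 1)
    (J : Z → ℝ)
    (hJ_bl : ∃ C : ℝ, blNormLE dist J C)
    (hJ_fix : ∀ z : Z, J z = ⨅ u : U, (c z u + β * ∫ z₁, J z₁ ∂(η z u))) :
    blNormLE dist J ((2 - β) / ((1 - β) * (1 - β * αZ)) * supNorm c) :=
  statement9_general β hβ0 hβ1 c hc_bdd hc_lip η hη_prob αZ hαZ hη_contract hβαZ J hJ_bl hJ_fix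
end
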